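/- Let C ⊆ F_2^n be a linear code, identify subsets of [n] with their indicator vectors in F_2^n, and let S* ⊆ [n] be such that |S*| ≥ |S* + c| for every codeword c ∈ C (i.e., S* has maximum size in its coset S* + C of the quotient F_2^n/C). Then S* is an unweighted one-sided 1/2-sparsifier of C: for every c ∈ C, wt(c_{S*}) ≥ wt(c)/2. -/

import Mathlib

/-- The Hamming weight of the projection of `c` onto the coordinates in `S`,
i.e. the number of coordinates `i ∈ S` with `c i ≠ 0`. -/
def wtOn {n : ℕ} (S : Finset (Fin n)) (c : Fin n → ZMod 2) : ℕ :=
  (S.filter fun i => c i ≠ 0).card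

/-- `S` is an unweighted one-sided `α`-sparsifier of the linear code `C` if
for all codewords `c ∈ C`, `wt(c_S) ≥ α · wt(c)`. -/
def IsSparsifier {n : ℕ} (C : Submodule (ZMod 2) (Fin n → ZMod 2)) (α : ℝ)
    (S : Finset (Fin n)) : Prop :=
  ∀ c ∈ C, α * (hammingNorm c : ℝ) ≤ (wtOn S c : ℝ)

/-- The indicator vector in `𝔽₂ⁿ` of a subset `S ⊆ [n]`. -/
def indicatorVec {n : ℕ} (S : Finset (Fin n)) : Fin n → ZMod 2 :=
  fun i => if i ∈ S then 1 else 0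

/-!
Write `T` for the support of a codeword `c`. Over `𝔽₂`, adding `c` to the indicator vector of
`S` gives the indicator vector of `S ∆ T`, and `|S ∆ T| = |S| + |T| - 2|S ∩ T|`. Maximality of
`|S|` in its coset therefore says `|T| ≤ 2|S ∩ T|`, i.e. `wt(c) ≤ 2 wt(c_S)`.
-/

open Finset
open scoped symmDiff

theorem Finset.card_symmDiff_add_two_mul_card_inter {α : Type*} [DecidableEq α]
    (s t : Finset α) : #(s ∆ t) + 2 * #(s ∩ t) = #s + #t := by
  rw [symmDiff_eq_sup_sdiff_inf, sup_eq_union, inf_eq_inter, ← card_union_add_card_inter s t,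
    ← card_sdiff_add_card_eq_card inter_subset_union]
  omega

section IndicatorVec

variable {n : ℕ}

theorem hammingNorm_indicatorVec (S : Finset (Fin n)) : hammingNorm (indicatorVec S) = #S := by
  simp [hammingNorm, indicatorVec]

theorem indicatorVec_symmDiff (S T : Finset (Fin n)) :
    indicatorVec (S ∆ T) = indicatorVec S + indicatorVec T := by
  ext i
  by_cases hS : i ∈ S <;> by_cases hT : i ∈ T <;>
    simp [indicatorVec, mem_symmDiff, hS, hT, CharTwo.add_self_eq_zero]

theorem indicatorVec_support (c : Fin n → ZMod 2) :
    indicatorVec ({i | c i ≠ 0} : Finset (Fin n)) = c := by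
  ext i
  simp only [indicatorVec, mem_filter, mem_univ, true_and]
  generalize c i = a
  revert a
  decide

theorem wtOn_eq_card_inter (S : Finset (Fin n)) (c : Fin n → ZMod 2) :
    wtOn S c = #(S ∩ ({i | c i ≠ 0} : Finset (Fin n))) := by
  rw [wtOn, ← filter_mem_eq_inter]
  simp

end IndicatorVec

/-- If `S*` has maximum size in its coset `S* + C` (i.e. `|S*| ≥ |S* + c|` for
every `c ∈ C`, where sets are identified with their indicator vectors), then
`S*` is an unweighted one-sided `1/2`-sparsifier of `C`. -/
theorem max_in_coset_is_sparsifier (n : ℕ) (C : Submodule (ZMod 2) (Fin n → ZMod 2))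
    (S : Finset (Fin n))
    (hmax : ∀ c ∈ C, hammingNorm (indicatorVec S + c) ≤ S.card) :
    IsSparsifier C (1 / 2) S := by
  intro c hc
  set T : Finset (Fin n) := {i | c i ≠ 0}
  have hcoset : #(S ∆ T) ≤ #S := by
    rw [← hammingNorm_indicatorVec, indicatorVec_symmDiff, indicatorVec_support]
    exact hmax c hc
  have hT : #T ≤ 2 * #(S ∩ T) := by
    have := card_symmDiff_add_two_mul_card_inter S T
    omega
  rw [wtOn_eq_card_inter, show hammingNorm c = #T from rfl]
  have : (#T : ℝ) ≤ 2 * #(S ∩ T) := by exact_mod_cast hT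
  linarith
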